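/- arXiv:2309.08593 — 7 statements merged into one kernel-verified Lean document; each statement's English description precedes it below -/
import Mathlib

section
/- For every k > 0 and every real x, |ReLU(x) - SiLU(kx)/k| ≤ 0.2785/k, where ReLU(x) = max(x,0) and SiLU(x) = x·σ(x). -/
/-!
ReLU is positively homogeneous, so `ReLU x - SiLU (k * x) / k = (ReLU (k * x) - SiLU (k * x)) / k`
and it suffices to bound `ReLU y - SiLU y` uniformly. By `σ(-y) = 1 - σ(y)` this difference is
`|y| σ(-|y|) = |y| / (1 + exp |y|)`, whose maximum over `y` is `W(1/e) ≈ 0.27846`, attained near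
`|y| ≈ 1.2785`.
-/

noncomputable def sigmoid (x : ℝ) : ℝ := 1 / (1 + Real.exp (-x))
noncomputable def SiLU (x : ℝ) : ℝ := x * sigmoid x
noncomputable def ReLU (x : ℝ) : ℝ := max x 0

lemma sigmoid_neg (x : ℝ) : sigmoid (-x) = 1 - sigmoid x := by
  have hx : 0 < Real.exp x := Real.exp_pos x
  simp only [sigmoid, neg_neg, Real.exp_neg]
  field_simp
  ring

lemma ReLU_mul_of_nonneg {k : ℝ} (hk : 0 ≤ k) (x : ℝ) : ReLU (k * x) = k * ReLU x := by
  simp only [ReLU, mul_max_of_nonneg _ _ hk, mul_zero]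

lemma ReLU_sub_SiLU (y : ℝ) : ReLU y - SiLU y = |y| * sigmoid (-|y|) := by
  rcases le_total 0 y with hy | hy
  · rw [ReLU, max_eq_left hy, abs_of_nonneg hy, SiLU, sigmoid_neg]
    ring
  · rw [ReLU, max_eq_right hy, abs_of_nonpos hy, neg_neg, SiLU]
    ring

lemma mul_sigmoid_neg_le {t : ℝ} (ht : 0 ≤ t) : t * sigmoid (-t) ≤ 0.2785 := by
  have hexp := Real.sum_le_exp_of_nonneg ht 8
  norm_num [Finset.sum_range_succ, Nat.factorial] at hexp
  rw [sigmoid, neg_neg, mul_one_div, div_le_iff₀ (by positivity)]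
  -- The degree-7 Taylor polynomial of `exp` already works; the certificate is centred at the
  -- maximiser `1023 / 800 ≈ 1.2785`.
  nlinarith [sq_nonneg (t - 1023 / 800),
    mul_nonneg ht (sq_nonneg (t - 1023 / 800)),
    mul_nonneg (pow_nonneg ht 2) (sq_nonneg (t - 1023 / 800)),
    mul_nonneg (pow_nonneg ht 3) (sq_nonneg (t - 1023 / 800)),
    mul_nonneg (pow_nonneg ht 4) (sq_nonneg (t - 1023 / 800)),
    mul_nonneg (pow_nonneg ht 5) (sq_nonneg (t - 1023 / 800))]

lemma abs_ReLU_sub_SiLU_le (y : ℝ) : |ReLU y - SiLU y| ≤ 0.2785 := by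
  have hσ : 0 ≤ sigmoid (-|y|) := by unfold sigmoid; positivity
  rw [ReLU_sub_SiLU, abs_of_nonneg (mul_nonneg (abs_nonneg y) hσ)]
  exact mul_sigmoid_neg_le (abs_nonneg y)

theorem relu_silu_approx (k : ℝ) (hk : 0 < k) (x : ℝ) :
    |ReLU x - SiLU (k * x) / k| ≤ 0.2785 / k := by
  have hscale : ReLU x - SiLU (k * x) / k = (ReLU (k * x) - SiLU (k * x)) / k := by
    rw [ReLU_mul_of_nonneg hk.le]
    field_simp
  rw [hscale, abs_div, abs_of_pos hk]
  exact div_le_div_of_nonneg_right (abs_ReLU_sub_SiLU_le (k * x)) hk.le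
end

section
/- Let h be a masked attention head on M_{N,D} with parameters W_QK, W_OV and mask Λ. Define h' on M_{N+1,D+1} with parameters W_QK' = W_QK ⊕ [1], W_OV' = W_OV ⊕ [0], and mask Λ' = Λ ⊕ [1]. Then h'(X ⊕ [1]) = h(X) ⊕ [0] for all X ∈ M_{N,D}. -/
open Matrix

/-- Masked softmax: row-wise softmax restricted to the entries where the mask is 1. -/
noncomputable def msoftmax {ι : Type*} [Fintype ι] (A Λ : Matrix ι ι ℝ) : Matrix ι ι ℝ :=
  Matrix.of fun i j => (Λ i j * Real.exp (A i j)) / ∑ k, Λ i k * Real.exp (A i k)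

/-- A mask matrix: 0/1 entries with at least one 1 in every row. -/
def IsMask {ι : Type*} [Fintype ι] (Λ : Matrix ι ι ℝ) : Prop :=
  (∀ i j, Λ i j = 0 ∨ Λ i j = 1) ∧ ∀ i, ∃ j, Λ i j = 1

/-- A masked attention head with parameter matrices `WQK`, `WOV` and mask `Λ`. -/
noncomputable def attnHead {ι κ : Type*} [Fintype ι] [Fintype κ]
    (WQK WOV : Matrix κ κ ℝ) (Λ : Matrix ι ι ℝ) (X : Matrix ι κ ℝ) : Matrix ι κ ℝ :=
  msoftmax (X * WQK * Xᵀ) Λ * X * WOV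

lemma msoftmax_fromBlocks {m n : Type*} [Fintype m] [Fintype n]
    (A : Matrix m m ℝ) (B : Matrix n n ℝ) (Λ : Matrix m m ℝ) (M : Matrix n n ℝ) :
    msoftmax (fromBlocks A 0 0 B) (fromBlocks Λ 0 0 M) =
      fromBlocks (msoftmax A Λ) 0 0 (msoftmax B M) := by
  ext (i | i) (j | j) <;> simp [msoftmax, Fintype.sum_sum_type]

lemma attnHead_fromBlocks {m n k l : Type*} [Fintype m] [Fintype n] [Fintype k] [Fintype l]
    (WQK WOV : Matrix k k ℝ) (WQK' WOV' : Matrix l l ℝ) (Λ : Matrix m m ℝ) (M : Matrix n n ℝ)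
    (X : Matrix m k ℝ) (Y : Matrix n l ℝ) :
    attnHead (fromBlocks WQK 0 0 WQK') (fromBlocks WOV 0 0 WOV') (fromBlocks Λ 0 0 M)
        (fromBlocks X 0 0 Y) =
      fromBlocks (attnHead WQK WOV Λ X) 0 0 (attnHead WQK' WOV' M Y) := by
  simp only [attnHead, fromBlocks_transpose, fromBlocks_multiply, Matrix.mul_zero,
    Matrix.zero_mul, add_zero, zero_add, transpose_zero, msoftmax_fromBlocks]

theorem attnHead_extend_general {N D : ℕ}
    (WQK WOV : Matrix (Fin D) (Fin D) ℝ) (Λ : Matrix (Fin N) (Fin N) ℝ)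
    (X : Matrix (Fin N) (Fin D) ℝ) :
    attnHead (fromBlocks WQK 0 0 (1 : Matrix (Fin 1) (Fin 1) ℝ))
        (fromBlocks WOV 0 0 (0 : Matrix (Fin 1) (Fin 1) ℝ))
        (fromBlocks Λ 0 0 (1 : Matrix (Fin 1) (Fin 1) ℝ))
        (fromBlocks X 0 0 (1 : Matrix (Fin 1) (Fin 1) ℝ)) =
      fromBlocks (attnHead WQK WOV Λ X) 0 0 (0 : Matrix (Fin 1) (Fin 1) ℝ) := by
  rw [attnHead_fromBlocks]
  congr 1
  exact Matrix.mul_zero _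

theorem attnHead_extend {N D : ℕ}
    (WQK WOV : Matrix (Fin D) (Fin D) ℝ) (Λ : Matrix (Fin N) (Fin N) ℝ)
    (hΛ : IsMask Λ) (X : Matrix (Fin N) (Fin D) ℝ) :
    attnHead (fromBlocks WQK 0 0 (1 : Matrix (Fin 1) (Fin 1) ℝ))
        (fromBlocks WOV 0 0 (0 : Matrix (Fin 1) (Fin 1) ℝ))
        (fromBlocks Λ 0 0 (1 : Matrix (Fin 1) (Fin 1) ℝ))
        (fromBlocks X 0 0 (1 : Matrix (Fin 1) (Fin 1) ℝ)) =
      fromBlocks (attnHead WQK WOV Λ X) 0 0 (0 : Matrix (Fin 1) (Fin 1) ℝ) :=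
  attnHead_extend_general WQK WOV Λ X
end

section
/- Single-neuron MLP as attention head: let v₁ ∈ ℝ^D (column vector), v₂ ∈ ℝ^D (row vector), and define f(X) = SiLU(X v₁) v₂ for X ∈ M_{N,D}, with SiLU applied entrywise. Define the attention head h on M_{N+1,D+1} with W_QK the block matrix with top-right block −v₁ and zeros elsewhere, W_OV = (v₁ v₂) ⊕ [0], and mask Λ with blocks [I_N, 𝟏; 0, 1] (each of the first N tokens attends to itself and the last token; the last token attends only to itself). Then h(X ⊕ [1]) = f(X) ⊕ [0] for all X ∈ M_{N,D}. -/
/-!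
With the last token fixed to `0 ⊕ [1]`, the score of token `i` against itself is `0` and against
the last token is `-(X v₁)ᵢ`, so the masked softmax over these two entries puts weight
`1 / (1 + exp (-(X v₁)ᵢ)) = sigmoid ((X v₁)ᵢ)` on token `i` itself. The value of the last token is
annihilated by `W_OV`, hence row `i` of the head is `sigmoid ((X v₁)ᵢ) (X v₁)ᵢ v₂ = SiLU ((X v₁)ᵢ) v₂`,
and the last row, which only sees the last token, is `0`.
-/

open Matrix

section Blocks

variable {m n o R : Type*} [Fintype n] [Fintype o] [DecidableEq o]

theorem fromBlocks_mul_fromBlocks_replicateCol_mul_transpose [NonAssocSemiring R]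
    (X : Matrix m n R) (w : n → R) :
    (fromBlocks X 0 0 1 : Matrix (m ⊕ o) (n ⊕ o) R) *
        (fromBlocks 0 (replicateCol o w) 0 0 : Matrix (n ⊕ o) (n ⊕ o) R) *
        (fromBlocks X 0 0 1 : Matrix (m ⊕ o) (n ⊕ o) R)ᵀ =
      (fromBlocks 0 (replicateCol o (X *ᵥ w)) 0 0 : Matrix (m ⊕ o) (m ⊕ o) R) := by
  rw [fromBlocks_transpose, fromBlocks_multiply, fromBlocks_multiply]
  simp [replicateCol_mulVec]

theorem fromBlocks_mul_fromBlocks_mul_fromBlocks_zero [Fintype m] [NonAssocSemiring R]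
    (A : Matrix m m R) (C : Matrix m o R) (D : Matrix o o R) (X : Matrix m n R)
    (W : Matrix n n R) :
    (fromBlocks A C 0 D : Matrix (m ⊕ o) (m ⊕ o) R) *
        (fromBlocks X 0 0 1 : Matrix (m ⊕ o) (n ⊕ o) R) *
        (fromBlocks W 0 0 0 : Matrix (n ⊕ o) (n ⊕ o) R) =
      (fromBlocks (A * X * W) 0 0 0 : Matrix (m ⊕ o) (n ⊕ o) R) := by
  simp [fromBlocks_multiply]

end Blocks

theorem msoftmax_fromBlocks_replicateCol_neg {m o : Type*} [Fintype m] [DecidableEq m]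
    [Fintype o] [DecidableEq o] [Unique o] (a : m → ℝ) :
    msoftmax (fromBlocks 0 (replicateCol o (-a)) 0 0 : Matrix (m ⊕ o) (m ⊕ o) ℝ)
        (fromBlocks 1 (replicateCol o 1) 0 1) =
      fromBlocks (diagonal fun i => sigmoid (a i))
        (replicateCol o fun i => Real.exp (-a i) * sigmoid (a i)) 0 1 := by
  ext (i | i) (j | j) <;>
    simp [msoftmax, Fintype.sum_sum_type, one_apply, diagonal, sigmoid, div_eq_mul_inv,
      Unique.eq_default]

theorem diagonal_sigmoid_mul_mul_vecMulVec {m n : Type*} [Fintype m] [DecidableEq m] [Fintype n]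
    (X : Matrix m n ℝ) (v₁ v₂ : n → ℝ) :
    diagonal (fun i => sigmoid ((X *ᵥ v₁) i)) * X * vecMulVec v₁ v₂ =
      vecMulVec (fun i => SiLU ((X *ᵥ v₁) i)) v₂ := by
  rw [Matrix.mul_assoc, mul_vecMulVec, mul_vecMulVec]
  congr 1
  ext i
  rw [mulVec_diagonal, SiLU, mul_comm]

theorem neuron_as_attnHead {N D : ℕ} (v₁ v₂ : Fin D → ℝ)
    (X : Matrix (Fin N) (Fin D) ℝ) :
    attnHead
        (fromBlocks 0 (Matrix.of fun d (_ : Fin 1) => -v₁ d) 0 0)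
        (fromBlocks (vecMulVec v₁ v₂) 0 0 (0 : Matrix (Fin 1) (Fin 1) ℝ))
        (fromBlocks (1 : Matrix (Fin N) (Fin N) ℝ)
          (Matrix.of fun _ (_ : Fin 1) => (1 : ℝ)) 0 (1 : Matrix (Fin 1) (Fin 1) ℝ))
        (fromBlocks X 0 0 (1 : Matrix (Fin 1) (Fin 1) ℝ)) =
      fromBlocks (vecMulVec (fun n => SiLU (X.mulVec v₁ n)) v₂) 0 0
        (0 : Matrix (Fin 1) (Fin 1) ℝ) := by
  rw [show (of fun d (_ : Fin 1) => -v₁ d) = replicateCol (Fin 1) (-v₁) from rfl,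
    show (of fun _ (_ : Fin 1) => (1 : ℝ)) = replicateCol (Fin 1) (1 : Fin N → ℝ) from rfl,
    attnHead, fromBlocks_mul_fromBlocks_replicateCol_mul_transpose, mulVec_neg,
    msoftmax_fromBlocks_replicateCol_neg, fromBlocks_mul_fromBlocks_mul_fromBlocks_zero,
    diagonal_sigmoid_mul_mul_vecMulVec]
end

section
/- With the mask Λ = [I_N, 𝟏; 0, 1] and W_QK having top-right block −v₁ and zeros elsewhere, the attention pattern msoftmax((X ⊕ [1]) W_QK (X ⊕ [1])ᵀ, Λ) equals the matrix with blocks [diag(σ(X v₁)), σ(−X v₁); 0, 1], where σ is applied entrywise. -/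
open Matrix

/-! The score matrix vanishes outside its top-right column, which is `-(X v₁)`. So in row `n` the
mask keeps exactly two exponentials, `exp 0 = 1` on the diagonal and `exp (-(X v₁)ₙ)` in the last
column, and normalising this pair gives `σ((X v₁)ₙ)` and `σ(-(X v₁)ₙ)`; the last row sees only its
own score `0`. -/

-- Without the ascription on the middle factor, `*` elaborates to `CStarMatrix`'s multiplication.
theorem fromBlocks_mul_fromBlocks_zero_mul_transpose {R m n o : Type*} [Fintype n] [Fintype o]
    [DecidableEq o] [Semiring R] (X : Matrix m n R) (B : Matrix n o R) :
    fromBlocks X 0 0 (1 : Matrix o o R) * (fromBlocks 0 B 0 0 : Matrix (n ⊕ o) (n ⊕ o) R) *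
        (fromBlocks X 0 0 (1 : Matrix o o R))ᵀ =
      fromBlocks 0 (X * B) 0 0 := by
  rw [fromBlocks_transpose, fromBlocks_multiply, fromBlocks_multiply]
  simp

theorem exp_div_one_add_exp_eq_sigmoid (x : ℝ) : Real.exp x / (1 + Real.exp x) = sigmoid x := by
  rw [sigmoid, Real.exp_neg]
  field_simp
  ring

theorem msoftmax_apply {ι : Type*} [Fintype ι] (A Λ : Matrix ι ι ℝ) (i j : ι) :
    msoftmax A Λ i j = Λ i j * Real.exp (A i j) / ∑ k, Λ i k * Real.exp (A i k) := rfl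

theorem msoftmax_fromBlocks_zero_replicateCol {m : Type*} [Fintype m] [DecidableEq m] (a : m → ℝ) :
    msoftmax (fromBlocks 0 (replicateCol (Fin 1) (-a)) 0 0)
        (fromBlocks 1 (replicateCol (Fin 1) 1) 0 1) =
      fromBlocks (diagonal fun i => sigmoid (a i))
        (replicateCol (Fin 1) fun i => sigmoid (-a i)) 0 1 := by
  ext (i | i) (j | j)
  · by_cases hij : i = j
    · simp [msoftmax_apply, Fintype.sum_sum_type, one_apply, hij, sigmoid]
    · simp [msoftmax_apply, Fintype.sum_sum_type, one_apply, hij]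
  · simp [msoftmax_apply, Fintype.sum_sum_type, one_apply, exp_div_one_add_exp_eq_sigmoid]
  · simp [msoftmax_apply]
  · simp [msoftmax_apply, one_apply, Fin.fin_one_eq_zero]

theorem neuron_attention_pattern {N D : ℕ} (v₁ : Fin D → ℝ)
    (X : Matrix (Fin N) (Fin D) ℝ) :
    msoftmax
        ((fromBlocks X 0 0 (1 : Matrix (Fin 1) (Fin 1) ℝ)) *
          (fromBlocks 0 (Matrix.of fun d (_ : Fin 1) => -v₁ d) 0 0 : Matrix (Fin D ⊕ Fin 1) (Fin D ⊕ Fin 1) ℝ) *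
          (fromBlocks X 0 0 (1 : Matrix (Fin 1) (Fin 1) ℝ))ᵀ)
        (fromBlocks (1 : Matrix (Fin N) (Fin N) ℝ)
          (Matrix.of fun _ (_ : Fin 1) => (1 : ℝ)) 0 (1 : Matrix (Fin 1) (Fin 1) ℝ)) =
      fromBlocks (Matrix.diagonal fun n => sigmoid (X.mulVec v₁ n))
        (Matrix.of fun n (_ : Fin 1) => sigmoid (-(X.mulVec v₁ n))) 0
        (1 : Matrix (Fin 1) (Fin 1) ℝ) := by
  have scores := fromBlocks_mul_fromBlocks_zero_mul_transpose X (replicateCol (Fin 1) (-v₁))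
  rw [← replicateCol_mulVec, mulVec_neg] at scores
  exact scores ▸ msoftmax_fromBlocks_zero_replicateCol (X *ᵥ v₁)
end

section
/- An MLP layer with generalized SiLU activation equals a sum of ℓ attention heads: for f(X) = α(X V₁) V₂ with α(x) = a₁ SiLU(a₂ x), V₁ ∈ M_{D,ℓ}, V₂ ∈ M_{ℓ,D}, there exist masked attention heads h₁,…,h_ℓ on M_{N+1,D+1} (each with internal rank-1 W_QK and W_OV, and mask [I_N, 𝟏; 0, 1]) such that f(X) ⊕ [0] = Σᵢ hᵢ(X ⊕ [1]) for all X ∈ M_{N,D}. -/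
open Matrix

/-!
With the mask `[I, 𝟏; 0, 1]`, token `n` attends only to itself and to the appended constant
token. If the scores are `0` on itself and `c` on the appended token, the masked softmax puts
weight `σ(-c)` on token `n`: a softmax over two entries is a sigmoid. Head `i` takes
`c = -a₂ ⟨xₙ, V₁ⁱ⟩`, and its value matrix sends `xₙ` to `a₁a₂ ⟨xₙ, V₁ⁱ⟩ V₂ⁱ` and the appended
token to `0`, so it outputs `σ(a₂ t) · a₁a₂ t · V₂ⁱ = a₁ SiLU(a₂ t) V₂ⁱ` with `t = ⟨xₙ, V₁ⁱ⟩`.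
Summing over `i` is the expansion of `α(X V₁) V₂` as a sum of outer products.
-/

namespace Matrix

theorem mul_eq_sum_vecMulVec {l m n α : Type*} [Fintype m] [NonUnitalNonAssocSemiring α]
    (A : Matrix l m α) (B : Matrix m n α) : A * B = ∑ i, vecMulVec (fun k => A k i) (B i) := by
  ext k j
  simp [mul_apply, sum_apply, vecMulVec_apply]

theorem fromBlocks_sum_zero {ι l m n o α : Type*} [AddCommMonoid α] (s : Finset ι)
    (A : ι → Matrix n l α) :
    fromBlocks (∑ i ∈ s, A i) 0 0 (0 : Matrix o m α) = ∑ i ∈ s, fromBlocks (A i) 0 0 0 := by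
  ext (k | k) (j | j) <;> simp [sum_apply]

end Matrix

theorem sigmoid_neg_s14 (c : ℝ) : sigmoid (-c) = (1 + Real.exp c)⁻¹ := by
  simp [sigmoid]

theorem sigmoid_eq_exp_div (c : ℝ) : sigmoid c = Real.exp c / (1 + Real.exp c) := by
  rw [sigmoid, Real.exp_neg]
  field_simp
  ring

section

variable {ι κ : Type*} [Fintype ι] [DecidableEq ι] [Fintype κ]

theorem msoftmax_sinkMask (c : ι → ℝ) :
    msoftmax (fromBlocks 0 (of fun n (_ : Fin 1) => c n) 0 0)
        (fromBlocks 1 (of fun _ (_ : Fin 1) => (1 : ℝ)) 0 1) =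
      fromBlocks (diagonal fun n => sigmoid (-c n)) (of fun n _ => sigmoid (c n)) 0 1 := by
  ext (n | n) (m | m)
  · simp [msoftmax, Fintype.sum_sum_type, one_apply, diagonal_apply, sigmoid_neg_s14,
      div_eq_inv_mul]
  · simp [msoftmax, Fintype.sum_sum_type, one_apply, sigmoid_eq_exp_div]
  · simp [msoftmax]
  · fin_cases n; fin_cases m
    simp [msoftmax, Fintype.sum_sum_type]

theorem attnHead_sinkMask_eq_SiLU (a₁ a₂ : ℝ) (v w : κ → ℝ) (X : Matrix ι κ ℝ) :
    attnHead (a₂ • fromBlocks 0 (of fun d (_ : Fin 1) => -v d) 0 0)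
        (fromBlocks ((a₁ * a₂) • vecMulVec v w) 0 0 (0 : Matrix (Fin 1) (Fin 1) ℝ))
        (fromBlocks 1 (of fun _ (_ : Fin 1) => (1 : ℝ)) 0 1)
        (fromBlocks X 0 0 (1 : Matrix (Fin 1) (Fin 1) ℝ)) =
      fromBlocks (vecMulVec (fun n => a₁ * SiLU (a₂ * (X *ᵥ v) n)) w) 0 0 0 := by
  set Y : Matrix (ι ⊕ Fin 1) (κ ⊕ Fin 1) ℝ := fromBlocks X 0 0 1 with hY
  have hscore : Y * (a₂ • fromBlocks 0 (of fun d (_ : Fin 1) => -v d) 0 0 :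
        Matrix (κ ⊕ Fin 1) (κ ⊕ Fin 1) ℝ) * Yᵀ =
      fromBlocks 0 (of fun n (_ : Fin 1) => -(a₂ * (X *ᵥ v) n)) 0 0 := by
    rw [hY, Matrix.mul_smul, Matrix.smul_mul, fromBlocks_transpose, fromBlocks_multiply,
      fromBlocks_multiply, fromBlocks_smul]
    ext (n | n) (m | m) <;> simp [mul_apply, mulVec, dotProduct, Finset.mul_sum, mul_comm]
  have hvalue : Y * fromBlocks ((a₁ * a₂) • vecMulVec v w) 0 0 (0 : Matrix (Fin 1) (Fin 1) ℝ) =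
      fromBlocks (vecMulVec ((a₁ * a₂) • X *ᵥ v) w) 0 0 0 := by
    rw [hY, fromBlocks_multiply]
    simp [mul_vecMulVec, Matrix.mul_smul, smul_vecMulVec]
  rw [attnHead, hscore, msoftmax_sinkMask, Matrix.mul_assoc, hvalue, fromBlocks_multiply]
  simp only [mul_vecMulVec, Matrix.mul_zero, add_zero, zero_mulVec, zero_vecMulVec]
  congr 2
  ext n
  simp [mulVec_diagonal, SiLU]
  ring

end

theorem mlp_as_sum_of_attnHeads {N D l : ℕ} (a₁ a₂ : ℝ)
    (V₁ : Matrix (Fin D) (Fin l) ℝ) (V₂ : Matrix (Fin l) (Fin D) ℝ)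
    (X : Matrix (Fin N) (Fin D) ℝ) :
    fromBlocks ((X * V₁).map (fun x => a₁ * SiLU (a₂ * x)) * V₂) 0 0
        (0 : Matrix (Fin 1) (Fin 1) ℝ) =
      ∑ i : Fin l,
        attnHead
          (a₂ • fromBlocks 0 (Matrix.of fun d (_ : Fin 1) => -V₁ d i) 0 0)
          (fromBlocks ((a₁ * a₂) • vecMulVec (fun d => V₁ d i) (V₂ i)) 0 0
            (0 : Matrix (Fin 1) (Fin 1) ℝ))
          (fromBlocks (1 : Matrix (Fin N) (Fin N) ℝ)
            (Matrix.of fun _ (_ : Fin 1) => (1 : ℝ)) 0 (1 : Matrix (Fin 1) (Fin 1) ℝ))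
          (fromBlocks X 0 0 (1 : Matrix (Fin 1) (Fin 1) ℝ)) := by
  simp only [attnHead_sinkMask_eq_SiLU]
  rw [mul_eq_sum_vecMulVec ((X * V₁).map _), fromBlocks_sum_zero]
  rfl
end

section
/- Pseudo-masking attention concentration (off-mask case): let A ∈ M_{N,N} with all entries bounded in absolute value by b, let Λ₁ ≤ Λ₂ be 0-1 mask matrices (each row of Λ₁ has a 1), and let Ω > ln(N/ε₀) + 2b. Then every entry (i,j) with Λ₁_{ij} = 0 of P := msoftmax(A + Ω Λ₁, Λ₂) satisfies P_{ij} < ε₀/N. -/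
/-! The row softmax weight of an entry is at most `exp` of its gap to any unmasked entry of the
row. Off `Λ₁` the logit is `A i j`, while the row has an entry `k` with `Λ₁ i k = 1 ≤ Λ₂ i k`,
whose logit is `A i k + Ω`; the gap is therefore at most `2 b - Ω < log (ε₀ / N)`. -/

open Matrix

theorem IsMask.nonneg {ι : Type*} [Fintype ι] {Λ : Matrix ι ι ℝ} (h : IsMask Λ) (i j : ι) :
    0 ≤ Λ i j := by
  rcases h.1 i j with h0 | h1 <;> simp [*]

theorem IsMask.le_one {ι : Type*} [Fintype ι] {Λ : Matrix ι ι ℝ} (h : IsMask Λ) (i j : ι) :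
    Λ i j ≤ 1 := by
  rcases h.1 i j with h0 | h1 <;> simp [*]

theorem msoftmax_le_exp_sub {ι : Type*} [Fintype ι] (X Λ : Matrix ι ι ℝ) {i j k : ι}
    (hnonneg : ∀ l, 0 ≤ Λ i l) (hj : Λ i j ≤ 1) (hk : Λ i k = 1) :
    msoftmax X Λ i j ≤ Real.exp (X i j - X i k) := by
  have hterm : ∀ l ∈ Finset.univ, 0 ≤ Λ i l * Real.exp (X i l) :=
    fun l _ => mul_nonneg (hnonneg l) (Real.exp_pos _).le
  have hden : Real.exp (X i k) ≤ ∑ l, Λ i l * Real.exp (X i l) := by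
    simpa [hk] using Finset.single_le_sum hterm (Finset.mem_univ k)
  rw [Real.exp_sub]
  calc msoftmax X Λ i j = Λ i j * Real.exp (X i j) / ∑ l, Λ i l * Real.exp (X i l) := rfl
    _ ≤ Real.exp (X i j) / ∑ l, Λ i l * Real.exp (X i l) :=
      div_le_div_of_nonneg_right (mul_le_of_le_one_left (Real.exp_pos _).le hj)
        (Finset.sum_nonneg hterm)
    _ ≤ Real.exp (X i j) / Real.exp (X i k) :=
      div_le_div_of_nonneg_left (Real.exp_pos _).le (Real.exp_pos _) hden

theorem pseudo_masking_offmask_general {N : ℕ} (A Λ₁ Λ₂ : Matrix (Fin N) (Fin N) ℝ)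
    (b ε₀ Ω : ℝ) (hε₀ : 0 < ε₀)
    (hA : ∀ i j, |A i j| ≤ b)
    (h₁ : IsMask Λ₁) (h₂ : IsMask Λ₂) (hle : ∀ i j, Λ₁ i j ≤ Λ₂ i j)
    (hΩ : Real.log (N / ε₀) + 2 * b < Ω) :
    ∀ i j, Λ₁ i j = 0 →
      msoftmax (A + Ω • Λ₁) Λ₂ i j < ε₀ / N := by
  intro i j hij
  obtain ⟨k, hk⟩ := h₁.2 i
  have hk₂ : Λ₂ i k = 1 := (h₂.1 i k).resolve_left (by linarith [hle i k])
  have hεN : 0 < ε₀ / N := div_pos hε₀ (Nat.cast_pos.2 i.pos)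
  have hgap : A i j - A i k ≤ 2 * b := by
    linarith [abs_le.1 (hA i j), abs_le.1 (hA i k)]
  calc msoftmax (A + Ω • Λ₁) Λ₂ i j
      ≤ Real.exp ((A + Ω • Λ₁) i j - (A + Ω • Λ₁) i k) :=
        msoftmax_le_exp_sub _ _ (h₂.nonneg i) (h₂.le_one i j) hk₂
    _ = Real.exp (A i j - A i k - Ω) := by
      simp only [Matrix.add_apply, Matrix.smul_apply, smul_eq_mul, hij, hk]; ring_nf
    _ < ε₀ / N := by
      rw [← Real.lt_log_iff_exp_lt hεN, ← inv_div, Real.log_inv]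
      linarith

theorem pseudo_masking_offmask {N : ℕ} (A Λ₁ Λ₂ : Matrix (Fin N) (Fin N) ℝ)
    (b ε₀ Ω : ℝ) (hb : 0 ≤ b) (hε₀ : 0 < ε₀)
    (hA : ∀ i j, |A i j| ≤ b)
    (h₁ : IsMask Λ₁) (h₂ : IsMask Λ₂) (hle : ∀ i j, Λ₁ i j ≤ Λ₂ i j)
    (hΩ : Real.log (N / ε₀) + 2 * b < Ω) :
    ∀ i j, Λ₁ i j = 0 →
      msoftmax (A + Ω • Λ₁) Λ₂ i j < ε₀ / N :=
  pseudo_masking_offmask_general A Λ₁ Λ₂ b ε₀ Ω hε₀ hA h₁ h₂ hle hΩ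
end

section
/- Pseudo-masking attention concentration (on-mask case): under the same hypotheses (entries of A bounded by b, Λ₁ ≤ Λ₂ masks, Ω > ln(N/ε₀) + 2b), for each row i the entries of P = msoftmax(A + ΩΛ₁, Λ₂) at positions j with Λ₁_{ij} = 1 sum to some S ∈ [1−ε₀, 1] and are proportional to the corresponding entries of msoftmax(A, Λ₁); hence |P_{ij} − msoftmax(A, Λ₁)_{ij}| ≤ ε₀ for all i,j. -/
open Matrix

/-! Adding `Ω` on the support of `Λ₁` multiplies the weights `Λ₁ᵢⱼ exp Aᵢⱼ` by `exp Ω` and leaves the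
weights `(Λ₂ - Λ₁)ᵢⱼ exp Aᵢⱼ` unchanged. Writing `D` and `R` for the row sums of these two families, the
row of `P` is therefore `S` times the row of `msoftmax A Λ₁` on the support of `Λ₁`, with
`S = exp Ω D / (exp Ω D + R)`, and every entry of `P - msoftmax A Λ₁` is at most the leaked mass
`1 - S = R / (exp Ω D + R)` in absolute value. Since `D ≥ exp (-b)` and `R ≤ N exp b`, the lower bound
on `Ω` makes `R ≤ ε₀ exp Ω D`, hence `1 - S ≤ ε₀`. -/

open Finset Real

theorem div_add_le_of_le_mul {x y ε : ℝ} (hx : 0 < x) (hy : 0 ≤ y) (h : y ≤ ε * x) :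
    y / (x + y) ≤ ε := by
  have hε : 0 ≤ ε := nonneg_of_mul_nonneg_left (hy.trans h) hx
  rw [div_le_iff₀ (by linarith)]
  nlinarith

theorem mul_exp_le_of_log_div_add_lt {n ε b Ω : ℝ} (hn : 0 < n) (hε : 0 < ε)
    (h : log (n / ε) + 2 * b < Ω) : n * exp b ≤ ε * (exp Ω * exp (-b)) := by
  have hΩ : n / ε * exp (2 * b) ≤ exp Ω := by
    rw [← exp_log (div_pos hn hε), ← exp_add]
    exact exp_le_exp.2 h.le
  calc n * exp b = ε * (n / ε * exp (2 * b) * exp (-b)) := by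
        rw [mul_assoc, ← exp_add]
        field_simp
        ring_nf
    _ ≤ ε * (exp Ω * exp (-b)) := by gcongr

section Mixture

variable {ι : Type*} [Fintype ι] {p r : ι → ℝ} {c : ℝ}

theorem mix_div_eq_mul_div (hD : ∑ l, p l ≠ 0) {k : ι} (hk : r k = 0) :
    (c * p k + r k) / (c * ∑ l, p l + ∑ l, r l) =
      c * (∑ l, p l) / (c * ∑ l, p l + ∑ l, r l) * (p k / ∑ l, p l) := by
  rw [hk, add_zero, div_mul_div_comm, mul_right_comm, mul_div_mul_right _ _ hD]

theorem sum_mix_div (s : Finset ι) (hrs : ∀ k ∈ s, r k = 0) (hps : ∀ k ∉ s, p k = 0) :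
    ∑ k ∈ s, (c * p k + r k) / (c * ∑ l, p l + ∑ l, r l) =
      c * (∑ l, p l) / (c * ∑ l, p l + ∑ l, r l) := by
  rw [← sum_div, sum_congr rfl fun k hk => by rw [hrs k hk, add_zero], ← mul_sum,
    sum_subset (subset_univ s) fun k _ hk => hps k hk]

theorem one_sub_mix_div (hr : ∀ k, 0 ≤ r k) (hc : 0 < c) (hD : 0 < ∑ l, p l) :
    1 - c * (∑ l, p l) / (c * ∑ l, p l + ∑ l, r l) =
      (∑ l, r l) / (c * ∑ l, p l + ∑ l, r l) := by
  have hR : 0 ≤ ∑ l, r l := sum_nonneg fun l _ => hr l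
  rw [one_sub_div (add_pos_of_pos_of_nonneg (mul_pos hc hD) hR).ne', add_sub_cancel_left]

theorem abs_mix_div_sub_div_le (hp : ∀ k, 0 ≤ p k) (hr : ∀ k, 0 ≤ r k) (hc : 0 < c)
    (hD : 0 < ∑ l, p l) {k : ι} (hk : p k = 0 ∨ r k = 0) :
    |(c * p k + r k) / (c * ∑ l, p l + ∑ l, r l) - p k / ∑ l, p l| ≤
      (∑ l, r l) / (c * ∑ l, p l + ∑ l, r l) := by
  have hR : 0 ≤ ∑ l, r l := sum_nonneg fun l _ => hr l
  have hD₂ : 0 ≤ c * ∑ l, p l + ∑ l, r l := by positivity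
  have hleak := one_sub_mix_div hr hc hD
  rcases hk with hk | hk
  · rw [hk, mul_zero, zero_add, zero_div, sub_zero, abs_of_nonneg (div_nonneg (hr k) hD₂)]
    exact div_le_div_of_nonneg_right (single_le_sum (fun l _ => hr l) (mem_univ k)) hD₂
  · have hQ : p k / ∑ l, p l ≤ 1 :=
      (div_le_one hD).2 (single_le_sum (fun l _ => hp l) (mem_univ k))
    rw [mix_div_eq_mul_div hD.ne' hk, ← sub_one_mul, abs_mul,
      abs_of_nonneg (div_nonneg (hp k) hD.le), abs_sub_comm, hleak, abs_of_nonneg (by positivity)]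
    exact mul_le_of_le_one_right (by positivity) hQ

theorem mix_div_concentration (s : Finset ι) (hp : ∀ k, 0 ≤ p k) (hr : ∀ k, 0 ≤ r k)
    (hps : ∀ k ∉ s, p k = 0) (hrs : ∀ k ∈ s, r k = 0) (hc : 0 < c) (hD : 0 < ∑ l, p l)
    {ε : ℝ} (hR : ∑ l, r l ≤ ε * (c * ∑ l, p l)) :
    (∃ S : ℝ, 1 - ε ≤ S ∧ S ≤ 1 ∧
        ∑ k ∈ s, (c * p k + r k) / (c * ∑ l, p l + ∑ l, r l) = S ∧
        ∀ k ∈ s, (c * p k + r k) / (c * ∑ l, p l + ∑ l, r l) = S * (p k / ∑ l, p l)) ∧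
      ∀ k, |(c * p k + r k) / (c * ∑ l, p l + ∑ l, r l) - p k / ∑ l, p l| ≤ ε := by
  have hleak : (∑ l, r l) / (c * ∑ l, p l + ∑ l, r l) ≤ ε :=
    div_add_le_of_le_mul (by positivity) (sum_nonneg fun l _ => hr l) hR
  have hleak₀ : 0 ≤ (∑ l, r l) / (c * ∑ l, p l + ∑ l, r l) := by
    have : 0 ≤ ∑ l, r l := sum_nonneg fun l _ => hr l
    positivity
  have hS := one_sub_mix_div hr hc hD
  refine ⟨⟨_, by linarith, by linarith, sum_mix_div s hrs hps,
    fun k hk => mix_div_eq_mul_div hD.ne' (hrs k hk)⟩, fun k => ?_⟩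
  have hk : p k = 0 ∨ r k = 0 := by
    by_cases hks : k ∈ s
    exacts [Or.inr (hrs k hks), Or.inl (hps k hks)]
  exact (abs_mix_div_sub_div_le hp hr hc hD hk).trans hleak

end Mixture

namespace IsMask

variable {ι : Type*} [Fintype ι] {Λ : Matrix ι ι ℝ}

theorem nonneg_s17 (h : IsMask Λ) (i j : ι) : 0 ≤ Λ i j := by
  rcases h.1 i j with h | h <;> simp [h]

theorem le_one_s17 (h : IsMask Λ) (i j : ι) : Λ i j ≤ 1 := by
  rcases h.1 i j with h | h <;> simp [h]

theorem eq_one_of_one_le (h : IsMask Λ) {i j : ι} (hij : 1 ≤ Λ i j) : Λ i j = 1 :=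
  le_antisymm (h.le_one_s17 i j) hij

end IsMask

noncomputable def maskedExp {ι : Type*} (A Λ : Matrix ι ι ℝ) : Matrix ι ι ℝ :=
  Matrix.of fun i j => Λ i j * exp (A i j)

theorem maskedExp_nonneg {ι : Type*} {A Λ : Matrix ι ι ℝ} {i j : ι} (hΛ : 0 ≤ Λ i j) :
    0 ≤ maskedExp A Λ i j :=
  mul_nonneg hΛ (exp_pos _).le

section MaskedExp

variable {ι : Type*} [Fintype ι] {A Λ Λ₁ Λ₂ : Matrix ι ι ℝ}

theorem msoftmax_eq_div (i j : ι) :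
    msoftmax A Λ i j = maskedExp A Λ i j / ∑ k, maskedExp A Λ i k :=
  rfl

theorem maskedExp_add_smul (h₁ : IsMask Λ₁) (h₂ : IsMask Λ₂) (hle : ∀ i j, Λ₁ i j ≤ Λ₂ i j)
    (Ω : ℝ) (i j : ι) :
    maskedExp (A + Ω • Λ₁) Λ₂ i j = exp Ω * maskedExp A Λ₁ i j + maskedExp A (Λ₂ - Λ₁) i j := by
  rcases h₁.1 i j with h | h
  · simp [maskedExp, h]
  · have h' : Λ₂ i j = 1 := h₂.eq_one_of_one_le (h ▸ hle i j)
    simp only [maskedExp, of_apply, Matrix.add_apply, Matrix.smul_apply, Matrix.sub_apply,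
      smul_eq_mul, h, h', mul_one, exp_add]
    ring

theorem msoftmax_add_smul_apply (h₁ : IsMask Λ₁) (h₂ : IsMask Λ₂)
    (hle : ∀ i j, Λ₁ i j ≤ Λ₂ i j) (Ω : ℝ) (i j : ι) :
    msoftmax (A + Ω • Λ₁) Λ₂ i j =
      (exp Ω * maskedExp A Λ₁ i j + maskedExp A (Λ₂ - Λ₁) i j) /
        (exp Ω * ∑ k, maskedExp A Λ₁ i k + ∑ k, maskedExp A (Λ₂ - Λ₁) i k) := by
  simp only [msoftmax_eq_div, maskedExp_add_smul h₁ h₂ hle, sum_add_distrib, mul_sum]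

theorem exists_exp_le_sum_maskedExp (h : IsMask Λ) (i : ι) :
    ∃ j, exp (A i j) ≤ ∑ k, maskedExp A Λ i k := by
  obtain ⟨j, hj⟩ := h.2 i
  refine ⟨j, ?_⟩
  simpa [maskedExp, hj] using
    single_le_sum (fun k _ => maskedExp_nonneg (h.nonneg_s17 i k)) (mem_univ j)

theorem sum_maskedExp_pos (h : IsMask Λ) (i : ι) : 0 < ∑ k, maskedExp A Λ i k :=
  let ⟨_, hj⟩ := exists_exp_le_sum_maskedExp (A := A) h i
  (exp_pos _).trans_le hj

theorem exp_neg_le_sum_maskedExp {b : ℝ} (h : IsMask Λ) (hA : ∀ i j, |A i j| ≤ b) (i : ι) :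
    exp (-b) ≤ ∑ k, maskedExp A Λ i k :=
  let ⟨j, hj⟩ := exists_exp_le_sum_maskedExp h i
  (exp_le_exp.2 (neg_le_of_abs_le (hA i j))).trans hj

theorem sum_maskedExp_le {b : ℝ} (hA : ∀ i j, |A i j| ≤ b) {i : ι} (hΛ : ∀ j, Λ i j ≤ 1) :
    ∑ k, maskedExp A Λ i k ≤ Fintype.card ι * exp b := by
  calc ∑ k, maskedExp A Λ i k ≤ ∑ _k : ι, exp b := sum_le_sum fun k _ =>
        (mul_le_of_le_one_left (exp_pos _).le (hΛ k)).trans (exp_le_exp.2 (le_of_abs_le (hA i k)))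
    _ = Fintype.card ι * exp b := by simp

theorem msoftmax_add_smul_concentration (h₁ : IsMask Λ₁) (h₂ : IsMask Λ₂)
    (hle : ∀ i j, Λ₁ i j ≤ Λ₂ i j) {Ω ε : ℝ}
    (hR : ∀ i, ∑ k, maskedExp A (Λ₂ - Λ₁) i k ≤ ε * (exp Ω * ∑ k, maskedExp A Λ₁ i k)) :
    (∀ i, ∃ S : ℝ, 1 - ε ≤ S ∧ S ≤ 1 ∧
        ∑ j ∈ univ.filter (fun j => Λ₁ i j = 1), msoftmax (A + Ω • Λ₁) Λ₂ i j = S ∧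
        ∀ j, Λ₁ i j = 1 → msoftmax (A + Ω • Λ₁) Λ₂ i j = S * msoftmax A Λ₁ i j) ∧
      ∀ i j, |msoftmax (A + Ω • Λ₁) Λ₂ i j - msoftmax A Λ₁ i j| ≤ ε := by
  have hrow (i : ι) :=
    mix_div_concentration (p := maskedExp A Λ₁ i) (r := maskedExp A (Λ₂ - Λ₁) i) (c := exp Ω)
      (univ.filter fun j => Λ₁ i j = 1)
      (fun k => maskedExp_nonneg (h₁.nonneg_s17 i k))
      (fun k => maskedExp_nonneg (sub_nonneg.2 (hle i k)))
      (fun k hk => by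
        simp [maskedExp, (h₁.1 i k).resolve_right (by simpa using hk)])
      (fun k hk => by
        have h := (mem_filter.1 hk).2
        simp [maskedExp, h, h₂.eq_one_of_one_le (h ▸ hle i k)])
      (exp_pos Ω) (sum_maskedExp_pos h₁ i) (hR i)
  simp only [msoftmax_add_smul_apply h₁ h₂ hle, msoftmax_eq_div (A := A) (Λ := Λ₁)]
  refine ⟨fun i => ?_, fun i j => (hrow i).2 j⟩
  obtain ⟨S, hS₁, hS₂, hsum, hprop⟩ := (hrow i).1
  exact ⟨S, hS₁, hS₂, hsum, fun j hj => hprop j (by simpa using hj)⟩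

end MaskedExp

theorem pseudo_masking_onmask_general {N : ℕ} (A Λ₁ Λ₂ : Matrix (Fin N) (Fin N) ℝ)
    (b ε₀ Ω : ℝ) (hε₀ : 0 < ε₀)
    (hA : ∀ i j, |A i j| ≤ b)
    (h₁ : IsMask Λ₁) (h₂ : IsMask Λ₂) (hle : ∀ i j, Λ₁ i j ≤ Λ₂ i j)
    (hΩ : Real.log (N / ε₀) + 2 * b < Ω) :
    (∀ i, ∃ S : ℝ, 1 - ε₀ ≤ S ∧ S ≤ 1 ∧
        (∑ j ∈ Finset.univ.filter (fun j => Λ₁ i j = 1),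
            msoftmax (A + Ω • Λ₁) Λ₂ i j) = S ∧
        ∀ j, Λ₁ i j = 1 →
          msoftmax (A + Ω • Λ₁) Λ₂ i j = S * msoftmax A Λ₁ i j) ∧
    ∀ i j, |msoftmax (A + Ω • Λ₁) Λ₂ i j - msoftmax A Λ₁ i j| ≤ ε₀ := by
  refine msoftmax_add_smul_concentration h₁ h₂ hle fun i => ?_
  calc ∑ k, maskedExp A (Λ₂ - Λ₁) i k ≤ N * exp b := by
        simpa using sum_maskedExp_le hA fun j => by
          linarith [h₂.le_one_s17 i j, h₁.nonneg_s17 i j, Matrix.sub_apply Λ₂ Λ₁ i j]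
    _ ≤ ε₀ * (exp Ω * exp (-b)) := mul_exp_le_of_log_div_add_lt (by exact_mod_cast i.pos) hε₀ hΩ
    _ ≤ ε₀ * (exp Ω * ∑ k, maskedExp A Λ₁ i k) := by
        gcongr
        exact exp_neg_le_sum_maskedExp h₁ hA i

theorem pseudo_masking_onmask {N : ℕ} (A Λ₁ Λ₂ : Matrix (Fin N) (Fin N) ℝ)
    (b ε₀ Ω : ℝ) (hb : 0 ≤ b) (hε₀ : 0 < ε₀)
    (hA : ∀ i j, |A i j| ≤ b)
    (h₁ : IsMask Λ₁) (h₂ : IsMask Λ₂) (hle : ∀ i j, Λ₁ i j ≤ Λ₂ i j)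
    (hΩ : Real.log (N / ε₀) + 2 * b < Ω) :
    (∀ i, ∃ S : ℝ, 1 - ε₀ ≤ S ∧ S ≤ 1 ∧
        (∑ j ∈ Finset.univ.filter (fun j => Λ₁ i j = 1),
            msoftmax (A + Ω • Λ₁) Λ₂ i j) = S ∧
        ∀ j, Λ₁ i j = 1 →
          msoftmax (A + Ω • Λ₁) Λ₂ i j = S * msoftmax A Λ₁ i j) ∧
    ∀ i j, |msoftmax (A + Ω • Λ₁) Λ₂ i j - msoftmax A Λ₁ i j| ≤ ε₀ :=
  pseudo_masking_onmask_general A Λ₁ Λ₂ b ε₀ Ω hε₀ hA h₁ h₂ hle hΩ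
end
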